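/- arXiv:1710.09822 — 2 statements merged into one kernel-verified Lean document; each statement's English description precedes it below -/
import Mathlib

section
/- Let A = ℤ[b₁, b₂, …] be the polynomial ring over ℤ in variables b(k) for k ≥ 1, set b(0) = 1, and let Δ : A → A ⊗_ℤ A be the unique ℤ-algebra homomorphism with Δ(b(n)) = ∑_{i=0}^{n} b(i) ⊗ b(n−i) for all n ≥ 1. Assign b(k) the weight k, and let N be the Newton sequence of the sequence of variables b. Then for every n ≥ 1, every element f ∈ A that is weighted-homogeneous of weight n and satisfies Δ(f) = f ⊗ 1 + 1 ⊗ f is an integer multiple of N(n); i.e., N(n) generates the group of primitive elements in weight n. -/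
/-- The Newton sequence of a sequence `t : ℕ → R`:
`N 0 = 0`, `N 1 = t 1`, and for `n ≥ 2`,
`N n = (∑_{k=1}^{n-1} (-1)^(k-1) * t k * N (n-k)) + (-1)^(n-1) * n * t n`. -/
noncomputable def newton {R : Type*} [CommRing R] (t : ℕ → R) : ℕ → R
  | 0 => 0
  | 1 => t 1
  | n + 2 =>
      (∑ k ∈ (Finset.Icc 1 (n + 1)).attach,
        (-1 : R) ^ ((k : ℕ) - 1) * t (k : ℕ) * newton t (n + 2 - (k : ℕ)))
      + (-1 : R) ^ (n + 1) * ((n + 2 : ℕ) : R) * t (n + 2)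
decreasing_by
  have hk := k.2
  simp only [Finset.mem_Icc] at hk
  omega

/-!
Slicing the coproduct by the coefficient of `b j` in the left tensor factor turns `Δ` into a
derivation `D j` of `A` with `D j (b k) = b (k - j)`; on a primitive `f` it returns the
coefficient of `b j` in `f`, which for weight reasons vanishes unless `j = n`. Differentiating the
Newton recursion gives `D j (N n) = (-1)^(n-1) n` if `j = n` and `0` otherwise, so
`(-1)^(n-1) n f - c N n`, with `c` the coefficient of `b n` in `f`, is killed by every `D j`.
The joint kernel consists of the constants, because if `b m` is the last variable occurring in `p`
then `D m p = ∂p/∂b m`. Hence `(-1)^(n-1) n f = c N n`, and evaluating at `b 1 = 1`, `b k = 0`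
(`k ≥ 2`), where `N n` becomes `1`, shows that `f` is `f(1, 0, 0, …)` times `N n`.
-/

open MvPolynomial TensorProduct

section Newton

variable {R : Type*} [CommRing R]

theorem newton_add_two (t : ℕ → R) (n : ℕ) :
    newton t (n + 2) = ∑ k ∈ Finset.range (n + 1), (-1) ^ k * t (k + 1) * newton t (n + 1 - k)
      + (-1) ^ (n + 1) * (n + 2 : ℕ) * t (n + 2) := by
  rw [newton, Finset.sum_attach (Finset.Icc 1 (n + 1))
      (fun k => (-1 : R) ^ (k - 1) * t k * newton t (n + 2 - k)),
    ← Finset.Ico_add_one_right_eq_Icc, Finset.sum_Ico_eq_sum_range]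
  simp only [Nat.add_sub_cancel, add_comm 1]
  congr 1
  exact Finset.sum_congr rfl fun k _ => by rw [show n + 2 - (k + 1) = n + 1 - k by omega]

theorem sum_range_mul_newton_add_eq_zero {t : ℕ → R} (ht0 : t 0 = 1) (n : ℕ) :
    ∑ k ∈ Finset.range n, (-1) ^ k * t k * newton t (n - k) + (-1) ^ n * n * t n = 0 := by
  match n with
  | 0 => simp
  | 1 => simp [ht0, newton]
  | n + 2 =>
    rw [Finset.sum_range_succ', Nat.sub_zero, newton_add_two]
    simp only [pow_succ, ht0, Finset.sum_neg_distrib, neg_mul, mul_neg,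
      mul_one, pow_zero, one_mul]
    push_cast
    ring

theorem map_newton {S : Type*} [CommRing S] (φ : R →+* S) (t : ℕ → R) (n : ℕ) :
    φ (newton t n) = newton (φ ∘ t) n := by
  induction n using Nat.strong_induction_on with
  | _ n ih =>
    match n with
    | 0 => simp [newton]
    | 1 => simp [newton]
    | n + 2 =>
      rw [newton_add_two, newton_add_two]
      simp only [map_add, map_sum, map_mul, map_pow, map_neg, map_one, map_natCast,
        Function.comp_apply]
      congr 1
      exact Finset.sum_congr rfl fun k _ => by rw [ih _ (by omega)]

theorem newton_eq_pow {t : ℕ → R} (ht : ∀ k, 2 ≤ k → t k = 0) {n : ℕ} (hn : 1 ≤ n) :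
    newton t n = t 1 ^ n := by
  induction n, hn using Nat.le_induction with
  | base => simp [newton]
  | succ n hn ih =>
    obtain ⟨m, rfl⟩ : ∃ m, n = m + 1 := ⟨n - 1, by omega⟩
    rw [newton_add_two, Finset.sum_range_succ', ht (m + 2) (by omega),
      Finset.sum_eq_zero fun k _ => by rw [ht _ (by omega), mul_zero, zero_mul]]
    simp [ih, pow_succ']

theorem eq_zero_of_sum_range_mul_eq_zero {t : ℕ → R} (ht0 : t 0 = 1) {e : ℕ → R}
    (he : ∀ n, ∑ k ∈ Finset.range n, (-1) ^ k * t k * e (n - k) = 0) {n : ℕ}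
    (hn : 1 ≤ n) :
    e n = 0 := by
  induction n using Nat.strong_induction_on with
  | _ n ih =>
    obtain ⟨m, rfl⟩ : ∃ m, n = m + 1 := ⟨n - 1, by omega⟩
    have h := he (m + 1)
    rw [Finset.sum_range_succ', Finset.sum_eq_zero fun k hk => ?_] at h
    · simpa [ht0] using h
    · rw [ih _ (by simp at hk; omega) (by simp at hk; omega), mul_zero]

theorem sum_range_shift_mul_newton {t : ℕ → R} (ht0 : t 0 = 1) (j n : ℕ) :
    ∑ k ∈ Finset.range n, (-1) ^ k * (if j ≤ k then t (k - j) else 0) * newton t (n - k) =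
      if j ≤ n then -((-1) ^ n * ((n - j : ℕ) : R) * t (n - j)) else 0 := by
  split_ifs with hjn
  · obtain ⟨m, rfl⟩ : ∃ m, n = j + m := ⟨n - j, by omega⟩
    rw [Finset.sum_range_add, Finset.sum_eq_zero fun k hk => by
      rw [if_neg (by simp at hk; omega), mul_zero, zero_mul], zero_add]
    simp only [if_pos (Nat.le_add_right _ _), Nat.add_sub_cancel_left, Nat.add_sub_add_left]
    rw [show ∑ l ∈ Finset.range m, (-1) ^ (j + l) * t l * newton t (m - l) =
        (-1) ^ j * ∑ l ∈ Finset.range m, (-1) ^ l * t l * newton t (m - l) by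
      rw [Finset.mul_sum]; exact Finset.sum_congr rfl fun _ _ => by ring]
    linear_combination (-1) ^ j * sum_range_mul_newton_add_eq_zero ht0 m
  · exact Finset.sum_eq_zero fun k hk => by
      rw [if_neg (by simp at hk; omega), mul_zero, zero_mul]

end Newton

namespace Derivation

variable {R S : Type*} [CommRing R] [CommRing S] [Algebra S R]

theorem map_neg_one_pow (D : Derivation S R R) (k : ℕ) : D ((-1) ^ k) = 0 := by
  rw [D.leibniz_pow, map_neg, D.map_one_eq_zero, neg_zero, smul_zero, smul_zero]

theorem map_newton (D : Derivation S R R) {t : ℕ → R} (ht0 : t 0 = 1) {j : ℕ} (hj : 1 ≤ j)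
    (hD : ∀ k, D (t k) = if j ≤ k then t (k - j) else 0) (n : ℕ) :
    D (newton t n) = if n = j then -((-1) ^ j * j : R) else 0 := by
  set δ : ℕ → R := fun m => if m = j then -((-1) ^ j * j : R) else 0
  rcases Nat.eq_zero_or_pos n with rfl | hn
  · simp [newton, show 0 ≠ j by omega]
  -- The errors `D (newton t m) - δ m` solve the homogeneous Newton system.
  refine sub_eq_zero.mp
    (eq_zero_of_sum_range_mul_eq_zero ht0 (e := fun m => D (newton t m) - δ m) (fun n => ?_) hn)
  have hS := congrArg D (sum_range_mul_newton_add_eq_zero ht0 n)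
  simp only [map_add, map_sum, map_zero, Derivation.leibniz, map_neg_one_pow,
    Derivation.map_natCast, smul_eq_mul, mul_zero, add_zero] at hS
  have hδ : ∑ k ∈ Finset.range n, (-1) ^ k * t k * δ (n - k) =
      if j ≤ n then -((-1) ^ n * (j : R) * t (n - j)) else 0 := by
    split_ifs with hjn
    · rw [Finset.sum_eq_single_of_mem (n - j) (Finset.mem_range.mpr (by omega)) fun k _ hkj => by
        simp only [δ, if_neg (show n - k ≠ j by omega), mul_zero]]
      simp only [δ, if_pos (show n - (n - j) = j by omega)]
      rw [show n = (n - j) + j by omega, pow_add, Nat.add_sub_cancel]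
      ring
    · exact Finset.sum_eq_zero fun k _ => by
        simp only [δ, if_neg (show n - k ≠ j by omega), mul_zero]
  have hshift := sum_range_shift_mul_newton ht0 j n
  simp only [← hD] at hshift
  rw [Finset.sum_add_distrib,
    show ∑ k ∈ Finset.range n, newton t (n - k) * ((-1) ^ k * D (t k)) =
      ∑ k ∈ Finset.range n, (-1) ^ k * D (t k) * newton t (n - k) from
      Finset.sum_congr rfl fun _ _ => by ring, hshift, hD] at hS
  rw [Finset.sum_congr rfl fun k _ => mul_sub _ _ _, Finset.sum_sub_distrib, hδ]
  split_ifs at hS ⊢ with hjn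
  · push_cast [hjn] at hS
    linear_combination hS
  · linear_combination hS

end Derivation

section Slice

variable {R A : Type*} [CommRing R] [CommRing A] [Algebra R A]

noncomputable def LinearMap.sliceLeft (φ : A →ₗ[R] R) : A ⊗[R] A →ₗ[R] A :=
  TensorProduct.lid R A ∘ₗ φ.rTensor A

@[simp]
theorem LinearMap.sliceLeft_tmul (φ : A →ₗ[R] R) (x y : A) :
    φ.sliceLeft (x ⊗ₜ y) = φ x • y := by
  simp [LinearMap.sliceLeft]

noncomputable def AlgHom.sliceLeft (ε : A →ₐ[R] R) : A ⊗[R] A →ₐ[R] A :=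
  (Algebra.TensorProduct.lid R A).toAlgHom.comp (Algebra.TensorProduct.map ε (AlgHom.id R A))

@[simp]
theorem AlgHom.sliceLeft_tmul (ε : A →ₐ[R] R) (x y : A) :
    ε.sliceLeft (x ⊗ₜ y) = ε x • y := by
  simp [AlgHom.sliceLeft]

theorem AlgHom.toLinearMap_sliceLeft (ε : A →ₐ[R] R) :
    ε.sliceLeft.toLinearMap = ε.toLinearMap.sliceLeft :=
  TensorProduct.ext' fun x y => by simp

theorem LinearMap.sliceLeft_mul (ε : A →ₐ[R] R) (φ : A →ₗ[R] R)
    (hφ : ∀ x y, φ (x * y) = φ x * ε y + ε x * φ y) (u w : A ⊗[R] A) :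
    φ.sliceLeft (u * w) = φ.sliceLeft u * ε.sliceLeft w + ε.sliceLeft u * φ.sliceLeft w := by
  induction u using TensorProduct.induction_on with
  | zero => simp
  | add u₁ u₂ h₁ h₂ => simp only [add_mul, map_add, h₁, h₂]; ring
  | tmul x y =>
    induction w using TensorProduct.induction_on with
    | zero => simp
    | add w₁ w₂ h₁ h₂ => simp only [mul_add, map_add, h₁, h₂]; ring
    | tmul x' y' =>
      simp only [Algebra.TensorProduct.tmul_mul_tmul, LinearMap.sliceLeft_tmul,
        AlgHom.sliceLeft_tmul, hφ, map_mul, Algebra.smul_def, map_add]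
      ring

noncomputable def Derivation.ofSliceLeft (ε : A →ₐ[R] R) (φ : A →ₗ[R] R)
    (hφ : ∀ x y, φ (x * y) = φ x * ε y + ε x * φ y) (Δ : A →ₐ[R] A ⊗[R] A)
    (hΔ : ε.sliceLeft.comp Δ = AlgHom.id R A) : Derivation R A A :=
  Derivation.mk' (φ.sliceLeft ∘ₗ Δ.toLinearMap) fun a b => by
    have hε : ∀ a, ε.sliceLeft (Δ a) = a := fun a => DFunLike.congr_fun hΔ a
    simp only [LinearMap.coe_comp, Function.comp_apply, AlgHom.toLinearMap_apply, map_mul,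
      φ.sliceLeft_mul ε hφ, hε, smul_eq_mul]
    ring

@[simp]
theorem Derivation.ofSliceLeft_apply (ε : A →ₐ[R] R) (φ : A →ₗ[R] R)
    (hφ : ∀ x y, φ (x * y) = φ x * ε y + ε x * φ y) (Δ : A →ₐ[R] A ⊗[R] A)
    (hΔ : ε.sliceLeft.comp Δ = AlgHom.id R A) (a : A) :
    Derivation.ofSliceLeft ε φ hφ Δ hΔ a = φ.sliceLeft (Δ a) := rfl

end Slice

namespace MvPolynomial

theorem coeff_single_one_mul {R σ : Type*} [CommRing R] (i : σ) (p q : MvPolynomial σ R) :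
    coeff (Finsupp.single i 1) (p * q) =
      coeff (Finsupp.single i 1) p * constantCoeff q +
        constantCoeff p * coeff (Finsupp.single i 1) q := by
  have h (r : MvPolynomial σ R) :
      coeff (Finsupp.single i 1) r = constantCoeff (pderiv i r) := by
    simp [constantCoeff_eq, coeff_pderiv]
  simp only [h, pderiv_mul, map_add, map_mul]

variable (R : Type*) [CommRing R]

noncomputable def bSeq (k : ℕ) : MvPolynomial ℕ+ R :=
  if hk : 0 < k then X ⟨k, hk⟩ else 1

variable {R}

@[simp]
theorem bSeq_zero : bSeq R 0 = 1 := rfl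

@[simp]
theorem bSeq_coe (k : ℕ+) : bSeq R k = X k := by
  rw [bSeq, dif_pos k.pos]
  rfl

theorem eq_bSeq {b : ℕ → MvPolynomial ℕ+ R} (hb0 : b 0 = 1) (hb : ∀ k : ℕ+, b k = X k) :
    b = bSeq R := by
  ext1 k
  rcases Nat.eq_zero_or_pos k with rfl | hk
  · rw [hb0, bSeq_zero]
  · lift k to ℕ+ using hk
    rw [hb, bSeq_coe]

noncomputable def lowering (j : ℕ+) : Derivation R (MvPolynomial ℕ+ R) (MvPolynomial ℕ+ R) :=
  mkDerivation R fun k => if (j : ℕ) ≤ k then bSeq R (k - j) else 0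

theorem lowering_bSeq (j : ℕ+) (k : ℕ) :
    lowering j (bSeq R k) = if (j : ℕ) ≤ k then bSeq R (k - j) else 0 := by
  rcases Nat.eq_zero_or_pos k with rfl | hk
  · simp
  · lift k to ℕ+ using hk
    rw [bSeq_coe, lowering, mkDerivation_X]

theorem lowering_eq_pderiv (j : ℕ+) {p : MvPolynomial ℕ+ R} (hp : ∀ i ∈ p.vars, i ≤ j) :
    lowering j p = pderiv j p := by
  refine derivation_eq_of_forall_mem_vars fun i hi => ?_
  have h := lowering_bSeq (R := R) j i
  rw [bSeq_coe] at h
  rw [h]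
  rcases (hp i hi).lt_or_eq with h | rfl
  · rw [if_neg (by exact_mod_cast h.not_ge), pderiv_X_of_ne h.ne]
  · simp

theorem notMem_vars_of_pderiv_eq_zero [NoZeroDivisors R] [CharZero R] {i : ℕ+}
    {p : MvPolynomial ℕ+ R} (h : pderiv i p = 0) : i ∉ p.vars := by
  intro hi
  obtain ⟨d, hd, hdi⟩ := (mem_vars_iff_mem_support i).mp hi
  have := congrArg (coeff (d - Finsupp.single i 1)) h
  rw [coeff_pderiv, tsub_add_cancel_of_le (Finsupp.single_le_iff.mpr
    (Nat.one_le_iff_ne_zero.mpr (Finsupp.mem_support_iff.mp hdi))), coeff_zero] at this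
  exact mem_support_iff.mp hd ((mul_eq_zero.mp this).resolve_right (Nat.cast_add_one_ne_zero _))

theorem eq_C_of_lowering_eq_zero [NoZeroDivisors R] [CharZero R] {p : MvPolynomial ℕ+ R}
    (hp : ∀ j, lowering j p = 0) : p = C (coeff 0 p) := by
  suffices ∀ s : Finset ℕ+, p.vars ⊆ s → p = C (coeff 0 p) from this _ subset_rfl
  intro s
  induction s using Finset.induction_on_max with
  | empty => exact fun h => vars_eq_empty_iff_eq_C.mp (Finset.subset_empty.mp h)
  | insert a s hlt ih =>
    intro hvars
    have hle : ∀ i ∈ p.vars, i ≤ a := fun i hi =>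
      (Finset.mem_insert.mp (hvars hi)).elim le_of_eq fun h => (hlt i h).le
    have ha : a ∉ p.vars :=
      notMem_vars_of_pderiv_eq_zero ((lowering_eq_pderiv a hle).symm.trans (hp a))
    exact ih fun i hi =>
      (Finset.mem_insert.mp (hvars hi)).resolve_left (by rintro rfl; exact ha hi)

theorem coeff_single_one_bSeq (j : ℕ+) (i : ℕ) :
    coeff (Finsupp.single j 1) (bSeq R i) = if i = j then 1 else 0 := by
  rcases Nat.eq_zero_or_pos i with rfl | hi
  · rw [bSeq_zero, coeff_one, if_neg (Finsupp.single_ne_zero.mpr one_ne_zero).symm,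
      if_neg j.ne_zero.symm]
  · lift i to ℕ+ using hi
    simp [coeff_X, Finsupp.single_left_inj one_ne_zero]

theorem aeval_zero_bSeq (i : ℕ) : aeval (0 : ℕ+ → R) (bSeq R i) = if i = 0 then 1 else 0 := by
  rcases Nat.eq_zero_or_pos i with rfl | hi
  · simp
  · lift i to ℕ+ using hi
    simp

theorem eval_newton_bSeq (x : R) {n : ℕ} (hn : 1 ≤ n) :
    eval (Pi.single 1 x) (newton (bSeq R) n) = x ^ n := by
  rw [map_newton, newton_eq_pow (fun k hk => ?_) hn]
  · rw [Function.comp_apply, show (1 : ℕ) = ((1 : ℕ+) : ℕ) from rfl, bSeq_coe, eval_X,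
      Pi.single_eq_same]
  · lift k to ℕ+ using by omega
    simp [show k ≠ 1 from fun h => by subst h; simp at hk]

section Coproduct

variable (Δ : MvPolynomial ℕ+ R →ₐ[R] MvPolynomial ℕ+ R ⊗[R] MvPolynomial ℕ+ R)
  (hΔ : ∀ n, 1 ≤ n →
    Δ (bSeq R n) = ∑ i ∈ Finset.range (n + 1), bSeq R i ⊗ₜ bSeq R (n - i))
include hΔ

theorem sliceLeft_bSeq (ψ : MvPolynomial ℕ+ R →ₗ[R] R) {m : ℕ}
    (hψ : ∀ i, ψ (bSeq R i) = if i = m then 1 else 0) {k : ℕ} (hk : 1 ≤ k) :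
    ψ.sliceLeft (Δ (bSeq R k)) = if m ≤ k then bSeq R (k - m) else 0 := by
  simp [hΔ k hk, hψ, ite_smul, Finset.sum_ite_eq']

theorem aeval_zero_sliceLeft_comp : (aeval (0 : ℕ+ → R)).sliceLeft.comp Δ = AlgHom.id R _ := by
  refine algHom_ext fun k => ?_
  rw [AlgHom.comp_apply, ← AlgHom.toLinearMap_apply, AlgHom.toLinearMap_sliceLeft, ← bSeq_coe,
    sliceLeft_bSeq Δ hΔ (aeval 0).toLinearMap aeval_zero_bSeq (k := k) k.pos]
  simp

theorem lowering_eq_ofSliceLeft (j : ℕ+) :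
    lowering j = Derivation.ofSliceLeft (aeval 0) (lcoeff R (Finsupp.single j 1))
      (fun p q => by simp [coeff_single_one_mul]) Δ (aeval_zero_sliceLeft_comp Δ hΔ) := by
  refine derivation_ext fun k => ?_
  rw [Derivation.ofSliceLeft_apply, ← bSeq_coe, lowering_bSeq,
    sliceLeft_bSeq Δ hΔ (lcoeff R (Finsupp.single j 1)) (coeff_single_one_bSeq j) (k := k) k.pos]

theorem lowering_of_primitive {f : MvPolynomial ℕ+ R} (hf : Δ f = f ⊗ₜ 1 + 1 ⊗ₜ f)
    (j : ℕ+) :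
    lowering j f = C (coeff (Finsupp.single j 1) f) := by
  rw [lowering_eq_ofSliceLeft Δ hΔ, Derivation.ofSliceLeft_apply, hf]
  simp [coeff_one, smul_eq_C_mul, (Finsupp.single_ne_zero.mpr one_ne_zero).symm]

theorem smul_eq_coeff_smul_newton_of_primitive [NoZeroDivisors R] [CharZero R] {n : ℕ+}
    {f : MvPolynomial ℕ+ R} (hf : f.IsWeightedHomogeneous (fun k : ℕ+ => (k : ℕ)) n)
    (hprim : Δ f = f ⊗ₜ 1 + 1 ⊗ₜ f) :
    (-((-1) ^ (n : ℕ) * n) : R) • f = coeff (Finsupp.single n 1) f • newton (bSeq R) n := by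
  set N := newton (bSeq R) n
  set c := coeff (Finsupp.single n 1) f
  set u : R := -((-1) ^ (n : ℕ) * n)
  have hcoeff : ∀ j : ℕ+, j ≠ n → coeff (Finsupp.single j 1) f = 0 := fun j hj =>
    hf.coeff_eq_zero _ (by simpa [Finsupp.weight_single] using hj)
  have hlow : ∀ j, lowering j (u • f - c • N) = 0 := by
    intro j
    rw [map_sub, Derivation.map_smul, Derivation.map_smul, lowering_of_primitive Δ hΔ hprim,
      (lowering j).map_newton bSeq_zero j.pos (lowering_bSeq j)]
    by_cases hj : j = n
    · subst hj
      simp [u, c, smul_eq_C_mul, mul_comm]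
    · simp [hcoeff j hj, Ne.symm (PNat.coe_injective.ne hj)]
  have hf0 : coeff 0 f = 0 := hf.coeff_eq_zero 0 (by simp [n.ne_zero.symm])
  have hN0 : coeff 0 N = 0 := by
    simpa [eval_zero, ← constantCoeff_eq] using eval_newton_bSeq (0 : R) n.pos
  have h0 := eq_C_of_lowering_eq_zero hlow
  rw [coeff_sub, coeff_smul, coeff_smul, hf0, hN0] at h0
  simpa [sub_eq_zero] using h0

theorem eq_eval_smul_newton_of_primitive [NoZeroDivisors R] [CharZero R] {n : ℕ} (hn : 1 ≤ n)
    {f : MvPolynomial ℕ+ R} (hf : f.IsWeightedHomogeneous (fun k : ℕ+ => (k : ℕ)) n)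
    (hprim : Δ f = f ⊗ₜ 1 + 1 ⊗ₜ f) :
    f = eval (Pi.single 1 1) f • newton (bSeq R) n := by
  lift n to ℕ+ using hn
  have hN := smul_eq_coeff_smul_newton_of_primitive Δ hΔ hf hprim
  have hc : coeff (Finsupp.single n 1) f = -((-1) ^ (n : ℕ) * n) * eval (Pi.single 1 1) f := by
    have := congrArg (eval (Pi.single 1 1)) hN
    rw [smul_eval, smul_eval, eval_newton_bSeq (1 : R) n.pos, one_pow, mul_one] at this
    exact this.symm
  refine smul_right_injective _ (show (-((-1) ^ (n : ℕ) * n) : R) ≠ 0 by simp) ?_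
  simp only [hN, hc, mul_smul]

end Coproduct

end MvPolynomial

open MvPolynomial TensorProduct in
/-- In `A = ℤ[b₁, b₂, …]` (formally `MvPolynomial ℕ+ ℤ`) with `b 0 = 1` and
`b k = X k` for `k ≥ 1`, coproduct `Δ (b n) = ∑_{i=0}^n b i ⊗ b (n - i)` and weight
`k` assigned to `b k`: for each `n ≥ 1`, every weighted-homogeneous `f` of weight `n`
which is primitive (`Δ f = f ⊗ 1 + 1 ⊗ f`) is an integer multiple of the Newton
element `N n`; i.e. `N n` generates the group of primitives in weight `n`. -/
theorem newton_generates_primitives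
    (b : ℕ → MvPolynomial ℕ+ ℤ) (hb0 : b 0 = 1)
    (hb : ∀ k : ℕ+, b k = X k)
    (Δ : MvPolynomial ℕ+ ℤ →ₐ[ℤ] MvPolynomial ℕ+ ℤ ⊗[ℤ] MvPolynomial ℕ+ ℤ)
    (hΔ : ∀ n : ℕ, 1 ≤ n →
      Δ (b n) = ∑ i ∈ Finset.range (n + 1), b i ⊗ₜ[ℤ] b (n - i)) :
    ∀ n : ℕ, 1 ≤ n → ∀ f : MvPolynomial ℕ+ ℤ,
      f.IsWeightedHomogeneous (fun k : ℕ+ => (k : ℕ)) n →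
      Δ f = f ⊗ₜ[ℤ] 1 + 1 ⊗ₜ[ℤ] f →
      ∃ c : ℤ, f = c • newton b n := by
  intro n hn f hf hprim
  obtain rfl := eq_bSeq hb0 hb
  exact ⟨_, eq_eval_smul_newton_of_primitive Δ hΔ hn hf hprim⟩
end

section
/- Let p be an odd prime, let A = 𝔽_p[ξ₁, ξ₂, …] be the polynomial ring over ZMod p in variables ξ(k) for k ≥ 1, define t : ℕ → A by t(n) = ξ(k) if n = p^k − 1 for some k ≥ 1 and t(n) = 0 otherwise, and let N be the Newton sequence of t. Then N((p−1)²) = −N(p−1)^{p−1}. -/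
lemma newton_unfold {R : Type*} [CommRing R] (t : ℕ → R) (n : ℕ) (hn : 2 ≤ n) :
    newton t n = (∑ k ∈ Finset.Icc 1 (n - 1),
        (-1 : R) ^ (k - 1) * t k * newton t (n - k))
      + (-1 : R) ^ (n - 1) * (n : R) * t n := by
  obtain ⟨m, rfl⟩ : ∃ m, n = m + 2 := ⟨n - 2, by omega⟩
  rw [newton]
  rw [← Finset.sum_attach (Finset.Icc 1 (m + 2 - 1))
    (fun k => (-1 : R) ^ (k - 1) * t k * newton t (m + 2 - k))]
  rfl

open MvPolynomial in
/-- In `A = 𝔽_p[ξ₁, ξ₂, …]` (formally `MvPolynomial ℕ+ (ZMod p)`, `p` an odd prime)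
with `ξ 0 = 1`, `ξ k = X k` for `k ≥ 1`, and `t n = ξ k` if `n = p^k - 1` for some
`k ≥ 1`, `t n = 0` otherwise, the Newton sequence of `t` satisfies: -/
theorem newton_sq_relation (p : ℕ) (hp : p.Prime) (hodd : Odd p)
    (ξ : ℕ → MvPolynomial ℕ+ (ZMod p)) (hξ0 : ξ 0 = 1)
    (hξ : ∀ k : ℕ+, ξ k = X k)
    (t : ℕ → MvPolynomial ℕ+ (ZMod p))
    (ht1 : ∀ k : ℕ, 1 ≤ k → t (p ^ k - 1) = ξ k)
    (ht0 : ∀ n : ℕ, (∀ k : ℕ, 1 ≤ k → n ≠ p ^ k - 1) → t n = 0) :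
    newton t ((p - 1) ^ 2) = -(newton t (p - 1)) ^ (p - 1) := by
  have hp3 : 3 ≤ p := by
    have h2 := hp.two_le
    rcases Nat.lt_or_ge p 3 with h | h
    · interval_cases p
      · exact absurd hodd (by decide)
    · exact h
  have hpA : ((p : ℕ) : MvPolynomial ℕ+ (ZMod p)) = 0 := by
    exact_mod_cast CharP.cast_eq_zero (MvPolynomial ℕ+ (ZMod p)) p
  have hneg : ((p - 1 : ℕ) : MvPolynomial ℕ+ (ZMod p)) = -1 := by
    rw [Nat.cast_sub hp.one_le, hpA]; ring
  have hodd' : Odd (p - 2) := by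
    obtain ⟨j, hj⟩ := hodd
    exact ⟨j - 1, by omega⟩
  have hpow : (-1 : MvPolynomial ℕ+ (ZMod p)) ^ (p - 2) = -1 := hodd'.neg_one_pow
  have hsq : p ^ 2 ≥ (p - 1) ^ 2 + 2 := by nlinarith [Nat.sub_add_cancel hp.one_le]
  have ht1' : t (p - 1) = ξ 1 := by
    have := ht1 1 le_rfl
    rwa [pow_one] at this
  have ht_small : ∀ n, n ≤ (p - 1) ^ 2 → n ≠ p - 1 → t n = 0 := by
    intro n h1 h2
    apply ht0
    intro k hk
    rcases Nat.lt_or_ge k 2 with h | h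
    · interval_cases k
      · rwa [pow_one]
    · have : p ^ 2 ≤ p ^ k := Nat.pow_le_pow_right hp.pos h
      omega
  have step : ∀ n, p ≤ n → n ≤ (p - 1) ^ 2 →
      newton t n = -(ξ 1 * newton t (n - (p - 1))) := by
    intro n h1 h2
    rw [newton_unfold t n (by omega)]
    rw [ht_small n h2 (by omega)]
    rw [Finset.sum_eq_single (p - 1)]
    · have e1 : p - 1 - 1 = p - 2 := by omega
      rw [ht1', e1, hpow]
      ring
    · intro k hk hne
      rw [Finset.mem_Icc] at hk
      rw [ht_small k (by omega) hne]
      ring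
    · intro h
      exact absurd (Finset.mem_Icc.mpr ⟨by omega, by omega⟩) h
  have base : newton t (p - 1) = ξ 1 := by
    rw [newton_unfold t (p - 1) (by omega)]
    rw [Finset.sum_eq_zero, ht1']
    · have e1 : p - 1 - 1 = p - 2 := by omega
      rw [e1, hpow, hneg]
      ring
    · intro k hk
      rw [Finset.mem_Icc] at hk
      rw [ht_small k (by have := Nat.le_self_pow (two_ne_zero) (p - 1); omega) (by omega)]
      ring
  have main : ∀ m, 1 ≤ m → m ≤ p - 1 →
      newton t (m * (p - 1)) = (-1) ^ (m - 1) * ξ 1 ^ m := by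
    intro m
    induction m with
    | zero => omega
    | succ m ih =>
      intro _ hm
      rcases Nat.eq_zero_or_pos m with rfl | hm1
      · simpa using base
      · have h1 : p ≤ (m + 1) * (p - 1) := by nlinarith [Nat.sub_add_cancel hp.one_le]
        have h2 : (m + 1) * (p - 1) ≤ (p - 1) ^ 2 := by nlinarith
        rw [step _ h1 h2]
        have e : (m + 1) * (p - 1) - (p - 1) = m * (p - 1) := by
          rw [add_mul, one_mul, Nat.add_sub_cancel]
        rw [e, ih hm1 (by omega)]
        obtain ⟨j, rfl⟩ : ∃ j, m = j + 1 := ⟨m - 1, by omega⟩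
        simp only [Nat.add_sub_cancel]
        ring
  have hfin : (p - 1) ^ 2 = (p - 1) * (p - 1) := sq (p - 1)
  rw [hfin, main (p - 1) (by omega) le_rfl, base]
  have e1 : p - 1 - 1 = p - 2 := by omega
  rw [e1, hpow]
  ring
end
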